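/- arXiv:2505.22361 — 4 statements merged into one kernel-verified Lean document; each statement's English description precedes it below -/
import Mathlib

section
/- Let {v_t}_{t≥0} and {b_t}_{t≥1} be nonnegative real sequences, and a ≥ 0. If v_0^2 ≤ a and v_t^2 ≤ a + ∑_{i=1}^t b_i v_i for all t ≥ 1, then for every t ≥ 0, a + ∑_{i=1}^t b_i v_i ≤ (√a + ∑_{i=1}^t b_i)^2. -/
/-! Writing `S_t = a + ∑_{i ≤ t} b_i v_i` and `B_t = √a + ∑_{i ≤ t} b_i`, induct on `t`: from
`v_{t+1}² ≤ S_t + b_{t+1} v_{t+1}` and `S_t ≤ B_t²` one gets `v_{t+1} ≤ B_t + b_{t+1}`, hence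
`S_{t+1} ≤ B_t² + b_{t+1} (B_t + b_{t+1}) ≤ B_{t+1}²`. -/

lemma le_add_of_sq_le_add_mul {S B b v : ℝ} (hB : 0 ≤ B) (hb : 0 ≤ b) (hS : S ≤ B ^ 2)
    (hv : v ^ 2 ≤ S + b * v) : v ≤ B + b := by
  by_contra! hlt
  -- `v > B + b ≥ 0` gives `v (v - b) > B²`, i.e. `v² > B² + b v ≥ S + b v`.
  nlinarith [mul_lt_mul_of_pos_left (show B < v - b by linarith) (show 0 < v by linarith),
    mul_le_mul_of_nonneg_left (show B ≤ v - b by linarith) hB]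

lemma add_mul_le_sq_add {S B b v : ℝ} (hB : 0 ≤ B) (hb : 0 ≤ b) (hS : S ≤ B ^ 2)
    (hv : v ^ 2 ≤ S + b * v) : S + b * v ≤ (B + b) ^ 2 :=
  calc S + b * v ≤ B ^ 2 + b * (B + b) :=
        add_le_add hS (mul_le_mul_of_nonneg_left (le_add_of_sq_le_add_mul hB hb hS hv) hb)
    _ ≤ (B + b) ^ 2 := by nlinarith

theorem stmt_0_general (a : ℝ) (v b : ℕ → ℝ)
    (hb : ∀ t, 0 ≤ b t)
    (h : ∀ t, 1 ≤ t → (v t) ^ 2 ≤ a + ∑ i ∈ Finset.Icc 1 t, b i * v i) :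
    ∀ t, a + ∑ i ∈ Finset.Icc 1 t, b i * v i ≤
      (Real.sqrt a + ∑ i ∈ Finset.Icc 1 t, b i) ^ 2 := by
  intro t
  induction t with
  | zero => simp [Real.sq_sqrt']
  | succ n ih =>
    have hstep := h (n + 1) (Nat.le_add_left 1 n)
    simp only [Finset.sum_Icc_succ_top (Nat.le_add_left 1 n), ← add_assoc] at hstep ⊢
    exact add_mul_le_sq_add
      (add_nonneg (Real.sqrt_nonneg a) (Finset.sum_nonneg fun i _ => hb i)) (hb _) ih hstep

theorem stmt_0 (a : ℝ) (v b : ℕ → ℝ) (ha : 0 ≤ a)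
    (hv : ∀ t, 0 ≤ v t) (hb : ∀ t, 0 ≤ b t)
    (h0 : (v 0) ^ 2 ≤ a)
    (h : ∀ t, 1 ≤ t → (v t) ^ 2 ≤ a + ∑ i ∈ Finset.Icc 1 t, b i * v i) :
    ∀ t, a + ∑ i ∈ Finset.Icc 1 t, b i * v i ≤
      (Real.sqrt a + ∑ i ∈ Finset.Icc 1 t, b i) ^ 2 :=
  stmt_0_general a v b hb h
end

section
/- Let Λ be positive definite and suppose Λ' = Λ + ℓ·φφᵀ with ℓ ≥ 0 satisfies det(Λ') ≤ 2·det(Λ). Then for any vector x, xᵀ Λ^{−1} x ≤ 2·xᵀ (Λ')^{−1} x. -/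
/-!
By the matrix determinant lemma, `det Λ' = det Λ · (1 + ℓ c)` with `c = φᵀ Λ⁻¹ φ`, and by
Sherman–Morrison `xᵀ Λ'⁻¹ x = xᵀ Λ⁻¹ x - ℓ (φᵀ Λ⁻¹ x)² / (1 + ℓ c)`. Cauchy–Schwarz for the
form `Λ⁻¹` bounds `(φᵀ Λ⁻¹ x)²` by `c · xᵀ Λ⁻¹ x`, whence `xᵀ Λ'⁻¹ x ≥ xᵀ Λ⁻¹ x / (1 + ℓ c)`,
i.e. `xᵀ Λ⁻¹ x ≤ (det Λ' / det Λ) · xᵀ Λ'⁻¹ x`.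
-/

open Matrix

namespace Matrix

variable {n : Type*} [Fintype n] [DecidableEq n]

theorem det_add_vecMulVec {R : Type*} [CommRing R] {A : Matrix n n R} (hA : IsUnit A.det)
    (u v : n → R) : (A + vecMulVec u v).det = A.det * (1 + v ⬝ᵥ A⁻¹ *ᵥ u) := by
  rw [vecMulVec_eq Unit, det_add_replicateCol_mul_replicateRow hA]
  congr 1
  simp only [det_unique, Matrix.add_apply, one_apply_eq]
  rw [Matrix.mul_assoc, ← replicateCol_mulVec, replicateRow_mul_replicateCol_apply]

theorem inv_add_vecMulVec {K : Type*} [Field K] {A : Matrix n n K} (hA : IsUnit A.det)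
    (u v : n → K) (h : 1 + v ⬝ᵥ A⁻¹ *ᵥ u ≠ 0) :
    (A + vecMulVec u v)⁻¹ =
      A⁻¹ - (1 + v ⬝ᵥ A⁻¹ *ᵥ u)⁻¹ • vecMulVec (A⁻¹ *ᵥ u) (v ᵥ* A⁻¹) := by
  apply inv_eq_right_inv
  have hAu : A *ᵥ (A⁻¹ *ᵥ u) = u := by rw [mulVec_mulVec, mul_nonsing_inv A hA, one_mulVec]
  have hk : (1 + v ⬝ᵥ A⁻¹ *ᵥ u)⁻¹ * (1 + v ⬝ᵥ A⁻¹ *ᵥ u) = 1 := inv_mul_cancel₀ h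
  rw [Matrix.add_mul, Matrix.mul_sub, Matrix.mul_sub, mul_nonsing_inv A hA, Matrix.mul_smul,
    Matrix.mul_smul, mul_vecMulVec, mul_vecMulVec, hAu, vecMulVec_mulVec, vecMulVec_mul,
    op_smul_eq_smul, smul_vecMulVec]
  linear_combination (norm := module) -(hk • vecMulVec u (v ᵥ* A⁻¹))

theorem dotProduct_inv_add_vecMulVec_mulVec {K : Type*} [Field K] {A : Matrix n n K}
    (hA : IsUnit A.det) (u v x : n → K) (h : 1 + v ⬝ᵥ A⁻¹ *ᵥ u ≠ 0) :
    x ⬝ᵥ (A + vecMulVec u v)⁻¹ *ᵥ x =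
      x ⬝ᵥ A⁻¹ *ᵥ x - (x ⬝ᵥ A⁻¹ *ᵥ u) * (v ⬝ᵥ A⁻¹ *ᵥ x) / (1 + v ⬝ᵥ A⁻¹ *ᵥ u) := by
  rw [inv_add_vecMulVec hA u v h, sub_mulVec, dotProduct_sub, smul_mulVec, vecMulVec_mulVec,
    op_smul_eq_smul, dotProduct_smul, dotProduct_smul, ← dotProduct_mulVec, smul_eq_mul,
    smul_eq_mul]
  ring

theorem PosSemidef.dotProduct_mulVec_mul_le {M : Matrix n n ℝ} (hM : M.PosSemidef)
    (x y : n → ℝ) : (x ⬝ᵥ M *ᵥ y) * (y ⬝ᵥ M *ᵥ x) ≤ (x ⬝ᵥ M *ᵥ x) * (y ⬝ᵥ M *ᵥ y) := by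
  simpa only [toBilin'_apply'] using
    (toBilin' M).apply_mul_apply_le_of_forall_zero_le
      (fun z => by simpa [toBilin'_apply'] using hM.dotProduct_mulVec_nonneg z) x y

theorem PosDef.dotProduct_inv_mulVec_le_det_div_mul {A : Matrix n n ℝ} (hA : A.PosDef) {ℓ : ℝ}
    (hℓ : 0 ≤ ℓ) (φ x : n → ℝ) :
    x ⬝ᵥ A⁻¹ *ᵥ x ≤
      (A + ℓ • vecMulVec φ φ).det / A.det * (x ⬝ᵥ (A + ℓ • vecMulVec φ φ)⁻¹ *ᵥ x) := by
  have hdet : 0 < A.det := hA.det_pos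
  have hc : 0 ≤ φ ⬝ᵥ A⁻¹ *ᵥ φ := by simpa using hA.inv.posSemidef.dotProduct_mulVec_nonneg φ
  have hcs := hA.inv.posSemidef.dotProduct_mulVec_mul_le x φ
  have hden : 0 < 1 + φ ⬝ᵥ A⁻¹ *ᵥ (ℓ • φ) := by
    rw [mulVec_smul, dotProduct_smul, smul_eq_mul]
    positivity
  rw [← smul_vecMulVec, det_add_vecMulVec hdet.ne'.isUnit,
    dotProduct_inv_add_vecMulVec_mulVec hdet.ne'.isUnit _ _ _ hden.ne',
    mul_div_cancel_left₀ _ hdet.ne', mul_sub, mul_div_cancel₀ _ hden.ne']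
  simp only [mulVec_smul, dotProduct_smul, smul_eq_mul]
  nlinarith [mul_le_mul_of_nonneg_left hcs hℓ]

end Matrix

theorem stmt_14 (ν : ℕ) (Λ Λ' : Matrix (Fin ν) (Fin ν) ℝ) (hΛ : Λ.PosDef)
    (φ : Fin ν → ℝ) (ℓ : ℝ) (hℓ : 0 ≤ ℓ)
    (hΛ' : Λ' = Λ + ℓ • Matrix.vecMulVec φ φ)
    (hdet : Λ'.det ≤ 2 * Λ.det) :
    ∀ x : Fin ν → ℝ, x ⬝ᵥ (Λ⁻¹ *ᵥ x) ≤ 2 * (x ⬝ᵥ (Λ'⁻¹ *ᵥ x)) := by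
  intro x
  have hΛ'_posDef : Λ'.PosDef := by
    simpa [hΛ'] using hΛ.add_posSemidef ((posSemidef_vecMulVec_self_star φ).smul hℓ)
  have hquad : 0 ≤ x ⬝ᵥ (Λ'⁻¹ *ᵥ x) := by
    simpa using hΛ'_posDef.inv.posSemidef.dotProduct_mulVec_nonneg x
  have hratio : Λ'.det / Λ.det ≤ 2 := div_le_of_le_mul₀ hΛ.det_pos.le zero_le_two hdet
  calc x ⬝ᵥ (Λ⁻¹ *ᵥ x) ≤ Λ'.det / Λ.det * (x ⬝ᵥ (Λ'⁻¹ *ᵥ x)) :=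
        hΛ' ▸ hΛ.dotProduct_inv_mulVec_le_det_div_mul hℓ φ x
    _ ≤ 2 * (x ⬝ᵥ (Λ'⁻¹ *ᵥ x)) := mul_le_mul_of_nonneg_right hratio hquad
end

section
/- (Inexact proximal gradient descent on strongly concave objective) Let f : X → ℝ be σ-strongly concave with M-Lipschitz gradient on convex compact X ⊆ ℝ^d, x* = argmax_{x∈X} f(x), and define f̃(x) = −f(x) − (σ/2)‖x‖². Fix α = 1/M and let x_{τ+1} = argmin_{u ∈ X} { −⟨ĝ_τ, u⟩ + (σ/2)‖u‖² + (1/(2α))‖u − x_τ‖² } where ε_τ = ‖−ĝ_τ − ∇f̃(x_τ)‖_2. With c_τ = (1 + σ/M)^τ, for every t ≥ 1: ∑_{i=1}^t c_{i-1}(f(x*) − f(x_i)) ≤ ( √(1/(2α))·‖x_0 − x*‖_2 + ∑_{i=1}^t √(2α)·c_{i-1}·ε_{i-1}/√(c_i) )². -/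
/-!
One step of the method at `x = x_τ` combines three inequalities: the descent lemma for the
`M`-smooth function `f̃` between `x_τ` and `x_{τ+1}`, the first-order convexity inequality of `f̃`
between `x_τ` and `x*`, and the quadratic growth of the `(σ + 1/α)`-strongly convex proximal
objective around its minimiser `x_{τ+1}`. With `ε_τ` entering through Cauchy–Schwarz, this gives
`f(x*) - f(x_{τ+1}) + (σ + M)/2 ‖x_{τ+1} - x*‖² ≤ M/2 ‖x_τ - x*‖² + ε_τ ‖x_{τ+1} - x*‖`.
Weighting the step `τ` by `c_τ` makes the distance terms telescope, since `M c_{τ+1} = (σ + M) c_τ`.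
For `v_i = √(c_i M / 2) ‖x_i - x*‖` this leaves a recursion `v_i² ≤ a + ∑_{j ≤ i} b_j v_j`, whose
solution `a + ∑ b_j v_j ≤ (√a + ∑ b_j)²` bounds the weighted sum of the gaps.
-/

open RealInnerProductSpace Filter Topology

section Analysis

open Set

lemma StrongConvexOn.add_sq_norm_sub_le_of_isMinOn {E : Type*} [NormedAddCommGroup E]
    [NormedSpace ℝ E] {s : Set E} {m : ℝ} {φ : E → ℝ} (hφ : StrongConvexOn s m φ) {x y : E}
    (hmin : IsMinOn φ s x) (hx : x ∈ s) (hy : y ∈ s) :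
    φ x + m / 2 * ‖y - x‖ ^ 2 ≤ φ y := by
  set K := m / 2 * ‖y - x‖ ^ 2
  have hseg : ∀ t ∈ Ioo (0 : ℝ) 1, φ x + (1 - t) * K ≤ φ y := by
    rintro t ⟨ht0, ht1⟩
    have hmem := hφ.1 hx hy (sub_nonneg.2 ht1.le) ht0.le (sub_add_cancel 1 t)
    have hle : φ x ≤ φ ((1 - t) • x + t • y) := hmin hmem
    have hconv := hφ.2 hx hy (sub_nonneg.2 ht1.le) ht0.le (sub_add_cancel 1 t)
    simp only [smul_eq_mul, norm_sub_rev x y] at hconv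
    have : t * (φ x + (1 - t) * K - φ y) ≤ 0 := by linear_combination hle + hconv
    exact sub_nonpos.1 (nonpos_of_mul_nonpos_right this ht0)
  have hlim : Tendsto (fun t : ℝ ↦ φ x + (1 - t) * K) (𝓝[>] 0) (𝓝 (φ x + K)) := by
    have : Continuous fun t : ℝ ↦ φ x + (1 - t) * K := by fun_prop
    simpa using (this.tendsto 0).mono_left nhdsWithin_le_nhds
  exact le_of_tendsto hlim (eventually_of_mem (Ioo_mem_nhdsGT zero_lt_one) hseg)

section InnerProductSpace

variable {E : Type*} [NormedAddCommGroup E] [InnerProductSpace ℝ E]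

lemma strongConvexOn_neg_inner_add_sq_norm_add_sq_norm_sub {s : Set E} (hs : Convex ℝ s)
    (g z : E) (σ A : ℝ) :
    StrongConvexOn s (σ + 2 * A) fun u ↦ -⟪g, u⟫ + σ / 2 * ‖u‖ ^ 2 + A * ‖u - z‖ ^ 2 := by
  rw [strongConvexOn_iff_convex]
  -- what remains after removing `(σ + 2A)/2 ‖u‖²` is affine in `u`
  have h : (fun u ↦ -⟪g, u⟫ + σ / 2 * ‖u‖ ^ 2 + A * ‖u - z‖ ^ 2 - (σ + 2 * A) / 2 * ‖u‖ ^ 2) =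
      fun u ↦ innerₗ E (-g - (2 * A) • z) u + A * ‖z‖ ^ 2 := by
    ext u
    simp only [innerₗ_apply_apply, norm_sub_sq_real, inner_sub_left, inner_neg_left,
      real_inner_smul_left, real_inner_comm u z]
    ring
  rw [h]
  exact ((innerₗ E (-g - (2 * A) • z)).convexOn hs).add_const _

variable [CompleteSpace E]

lemma DifferentiableAt.hasDerivAt_comp_lineMap {f : E → ℝ} {x y : E} {s : ℝ}
    (hf : DifferentiableAt ℝ f (AffineMap.lineMap x y s)) :
    HasDerivAt (fun t ↦ f (AffineMap.lineMap x y t))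
      ⟪gradient f (AffineMap.lineMap x y s), y - x⟫ s :=
  (hf.hasFDerivAt.comp_hasDerivAt s AffineMap.hasDerivAt_lineMap).congr_deriv
    inner_gradient_left.symm

lemma ConvexOn.inner_gradient_le_sub {s : Set E} {f : E → ℝ} (hf : ConvexOn ℝ s f)
    {x y : E} (hx : x ∈ s) (hy : y ∈ s) (hfx : DifferentiableAt ℝ f x) :
    ⟪gradient f x, y - x⟫ ≤ f y - f x := by
  have h := (hf.comp_affineMap (AffineMap.lineMap x y)).le_slope_of_hasDerivAt
    (x := 0) (y := 1) (by simpa using hx) (by simpa using hy) zero_lt_one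
    (DifferentiableAt.hasDerivAt_comp_lineMap (s := 0) (by simpa using hfx))
  simpa [slope] using h

lemma le_add_inner_gradient_add_sq_of_lipschitz {f : E → ℝ} {M : ℝ} (hf : Differentiable ℝ f)
    (hLip : ∀ a b, ‖gradient f a - gradient f b‖ ≤ M * ‖a - b‖) (x y : E) :
    f y ≤ f x + ⟪gradient f x, y - x⟫ + M / 2 * ‖y - x‖ ^ 2 := by
  set G := ⟪gradient f x, y - x⟫
  set q : ℝ → ℝ := fun t ↦ f (AffineMap.lineMap x y t) - t * G - M / 2 * ‖y - x‖ ^ 2 * t ^ 2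
  have hq : ∀ s, HasDerivAt q
      (⟪gradient f (AffineMap.lineMap x y s), y - x⟫ - G - M * ‖y - x‖ ^ 2 * s) s := fun s ↦ by
    refine ((((hf _).hasDerivAt_comp_lineMap (s := s)).sub ((hasDerivAt_id s).mul_const G)).sub
      ((hasDerivAt_pow 2 s).const_mul (M / 2 * ‖y - x‖ ^ 2))).congr_deriv ?_
    simp only [one_mul, Nat.cast_ofNat]
    ring
  -- along the segment the slope grows by at most `M s ‖y - x‖²`
  have hq' : ∀ s ∈ interior (Icc (0 : ℝ) 1),
      ⟪gradient f (AffineMap.lineMap x y s), y - x⟫ - G - M * ‖y - x‖ ^ 2 * s ≤ 0 := by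
    intro s hs
    rw [interior_Icc] at hs
    have hdist : ‖AffineMap.lineMap x y s - x‖ = s * ‖y - x‖ := by
      rw [← dist_eq_norm, dist_lineMap_left, Real.norm_of_nonneg hs.1.le, dist_eq_norm,
        norm_sub_rev]
    suffices ⟪gradient f (AffineMap.lineMap x y s), y - x⟫ - G ≤ M * ‖y - x‖ ^ 2 * s by linarith
    calc ⟪gradient f (AffineMap.lineMap x y s), y - x⟫ - G
        = ⟪gradient f (AffineMap.lineMap x y s) - gradient f x, y - x⟫ := (inner_sub_left ..).symm
      _ ≤ ‖gradient f (AffineMap.lineMap x y s) - gradient f x‖ * ‖y - x‖ := real_inner_le_norm ..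
      _ ≤ M * (s * ‖y - x‖) * ‖y - x‖ := by
          gcongr
          exact hdist ▸ hLip _ _
      _ = M * ‖y - x‖ ^ 2 * s := by ring
  have hanti : AntitoneOn q (Icc 0 1) :=
    antitoneOn_of_hasDerivWithinAt_nonpos (convex_Icc 0 1)
      (fun s _ ↦ (hq s).continuousAt.continuousWithinAt) (fun s _ ↦ (hq s).hasDerivWithinAt) hq'
  have h01 := hanti (left_mem_Icc.2 zero_le_one) (right_mem_Icc.2 zero_le_one) zero_le_one
  simp only [q, AffineMap.lineMap_apply_zero, AffineMap.lineMap_apply_one] at h01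
  linarith

lemma proximal_gradient_step_le {X : Set E} (hX : Convex ℝ X) {h : E → ℝ}
    (hconv : ConvexOn ℝ X h) (hd : Differentiable ℝ h) {σ M : ℝ}
    (hLip : ∀ a b, ‖gradient h a - gradient h b‖ ≤ M * ‖a - b‖) {g x x' z : E}
    (hx : x ∈ X) (hx' : x' ∈ X) (hz : z ∈ X)
    (hmin : ∀ u ∈ X, -⟪g, x'⟫ + σ / 2 * ‖x'‖ ^ 2 + M / 2 * ‖x' - x‖ ^ 2 ≤
      -⟪g, u⟫ + σ / 2 * ‖u‖ ^ 2 + M / 2 * ‖u - x‖ ^ 2) :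
    h x' + σ / 2 * ‖x'‖ ^ 2 - (h z + σ / 2 * ‖z‖ ^ 2) + (σ + M) / 2 * ‖x' - z‖ ^ 2 ≤
      M / 2 * ‖x - z‖ ^ 2 + ‖g + gradient h x‖ * ‖x' - z‖ := by
  have hdescent := le_add_inner_gradient_add_sq_of_lipschitz hd hLip x x'
  have hfirst := hconv.inner_gradient_le_sub hx hz (hd x)
  have hprox := (strongConvexOn_neg_inner_add_sq_norm_add_sq_norm_sub hX g x σ (M / 2))
    |>.add_sq_norm_sub_le_of_isMinOn (isMinOn_iff.2 hmin) hx' hz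
  have herr := real_inner_le_norm (g + gradient h x) (x' - z)
  simp only [inner_add_left, inner_sub_right] at hdescent hfirst herr
  rw [norm_sub_rev z x', norm_sub_rev z x] at hprox
  linarith

end InnerProductSpace

end Analysis

section Sequences

open Finset

lemma add_sum_mul_le_sq_of_sq_le {a : ℝ} (ha : 0 ≤ a) {b v : ℕ → ℝ} (hb : ∀ i, 0 ≤ b i)
    {t : ℕ} (h : ∀ i ∈ Icc 1 t, v i ^ 2 ≤ a + ∑ j ∈ Icc 1 i, b j * v j) :
    a + ∑ j ∈ Icc 1 t, b j * v j ≤ (√a + ∑ j ∈ Icc 1 t, b j) ^ 2 := by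
  induction t with
  | zero => simp [Real.sq_sqrt ha]
  | succ n ih =>
    have ihn := ih fun i hi ↦ h i (Icc_subset_Icc_right n.le_succ hi)
    have hv := h (n + 1) (right_mem_Icc.2 n.succ_pos)
    rw [sum_Icc_succ_top n.succ_pos] at hv ⊢
    rw [sum_Icc_succ_top n.succ_pos, ← add_assoc]
    set W := √a + ∑ j ∈ Icc 1 n, b j
    have hW : 0 ≤ W := add_nonneg (Real.sqrt_nonneg a) (sum_nonneg fun j _ ↦ hb j)
    -- `v² ≤ W² + b v` forces `v ≤ W + b`
    have hvle : v (n + 1) ≤ W + b (n + 1) := by nlinarith [hb (n + 1)]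
    nlinarith [hb (n + 1)]

lemma sum_Icc_le_sq_of_step {w b v : ℕ → ℝ} (hw : ∀ i, 0 ≤ w i) (hb : ∀ i, 0 ≤ b i)
    (hv₀ : 0 ≤ v 0) (hstep : ∀ i, w (i + 1) + v (i + 1) ^ 2 ≤ v i ^ 2 + b (i + 1) * v (i + 1))
    (t : ℕ) : ∑ i ∈ Icc 1 t, w i ≤ (v 0 + ∑ i ∈ Icc 1 t, b i) ^ 2 := by
  have htel : ∀ n, ∑ i ∈ Icc 1 n, w i + v n ^ 2 ≤ v 0 ^ 2 + ∑ i ∈ Icc 1 n, b i * v i := by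
    intro n
    induction n with
    | zero => simp
    | succ n ih =>
      rw [sum_Icc_succ_top n.succ_pos, sum_Icc_succ_top n.succ_pos]
      linarith [hstep n]
  have hseq := add_sum_mul_le_sq_of_sq_le (sq_nonneg (v 0)) hb (v := v) (t := t) fun i _ ↦ by
    linarith [htel i, sum_nonneg fun j (_ : j ∈ Icc 1 i) ↦ hw j]
  rw [Real.sqrt_sq hv₀] at hseq
  linarith [htel t, sq_nonneg (v t)]

lemma sum_Icc_pow_mul_le_sq_of_step {A q : ℝ} (hA : 0 < A) (hq : 0 < q) {D e r : ℕ → ℝ}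
    (hD : ∀ i, 0 ≤ D i) (he : ∀ i, 0 ≤ e i) (hr₀ : 0 ≤ r 0)
    (hstep : ∀ i, D (i + 1) + q * A * r (i + 1) ^ 2 ≤ A * r i ^ 2 + e i * r (i + 1)) (t : ℕ) :
    ∑ i ∈ Icc 1 t, q ^ (i - 1) * D i ≤
      (√A * r 0 + ∑ i ∈ Icc 1 t, √(1 / A) * q ^ (i - 1) * e (i - 1) / √(q ^ i)) ^ 2 := by
  set v : ℕ → ℝ := fun i ↦ √A * √(q ^ i) * r i
  have hv_sq : ∀ i, v i ^ 2 = A * q ^ i * r i ^ 2 := fun i ↦ by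
    rw [mul_pow, mul_pow, Real.sq_sqrt hA.le, Real.sq_sqrt (by positivity)]
  have hbv : ∀ i, √(1 / A) * q ^ i * e i / √(q ^ (i + 1)) * v (i + 1) =
      q ^ i * e i * r (i + 1) := fun i ↦ by
    have hA' : √(1 / A) * √A = 1 := by
      rw [← Real.sqrt_mul (by positivity), one_div_mul_cancel hA.ne', Real.sqrt_one]
    have hq' : √(q ^ (i + 1)) ≠ 0 := (Real.sqrt_pos.2 (pow_pos hq _)).ne'
    rw [div_mul_eq_mul_div, div_eq_iff hq']
    linear_combination q ^ i * e i * r (i + 1) * √(q ^ (i + 1)) * hA'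
  simpa only [v, pow_zero, Real.sqrt_one, mul_one] using
    sum_Icc_le_sq_of_step (t := t) (w := fun i ↦ q ^ (i - 1) * D i) (v := v)
      (b := fun i ↦ √(1 / A) * q ^ (i - 1) * e (i - 1) / √(q ^ i))
      (fun i ↦ mul_nonneg (pow_pos hq _).le (hD i)) (fun i ↦ by have := he (i - 1); positivity)
      (by positivity) fun i ↦ by
        simp only [Nat.add_sub_cancel, hv_sq, hbv]
        rw [pow_succ q i]
        nlinarith [mul_le_mul_of_nonneg_left (hstep i) (pow_pos hq i).le]

end Sequences

theorem stmt_16_general (d : ℕ) (σ M α : ℝ) (hσ : 0 < σ) (hM : 0 < M) (hα : α = 1 / M)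
    (X : Set (EuclideanSpace ℝ (Fin d))) (hX : Convex ℝ X)
    (f ftilde : EuclideanSpace ℝ (Fin d) → ℝ) (hf : ContDiff ℝ 2 f)
    (hft : ftilde = fun x => -f x - σ / 2 * ‖x‖ ^ 2)
    (hconv : ConvexOn ℝ X ftilde)
    (hLip : ∀ x y : EuclideanSpace ℝ (Fin d),
      ‖gradient ftilde x - gradient ftilde y‖ ≤ M * ‖x - y‖)
    (xstar : EuclideanSpace ℝ (Fin d)) (hxstar : xstar ∈ X)
    (hopt : ∀ x ∈ X, f x ≤ f xstar)
    (x g : ℕ → EuclideanSpace ℝ (Fin d)) (hxX : ∀ τ, x τ ∈ X)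
    (hmin : ∀ τ, ∀ u ∈ X,
      -⟪g τ, x (τ + 1)⟫ + σ / 2 * ‖x (τ + 1)‖ ^ 2 +
          1 / (2 * α) * ‖x (τ + 1) - x τ‖ ^ 2 ≤
        -⟪g τ, u⟫ + σ / 2 * ‖u‖ ^ 2 + 1 / (2 * α) * ‖u - x τ‖ ^ 2)
    (ε : ℕ → ℝ) (hε : ∀ τ, ε τ = ‖-g τ - gradient ftilde (x τ)‖)
    (c : ℕ → ℝ) (hc : ∀ τ, c τ = (1 + σ / M) ^ τ) :
    ∀ t : ℕ, 1 ≤ t →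
      ∑ i ∈ Finset.Icc 1 t, c (i - 1) * (f xstar - f (x i)) ≤
        (Real.sqrt (1 / (2 * α)) * ‖x 0 - xstar‖ +
          ∑ i ∈ Finset.Icc 1 t,
            Real.sqrt (2 * α) * c (i - 1) * ε (i - 1) / Real.sqrt (c i)) ^ 2 := by
  intro t _
  obtain rfl : c = fun τ ↦ (1 + σ / M) ^ τ := funext hc
  have hA : 1 / (2 * α) = M / 2 := by rw [hα]; field_simp
  have hf_eq : ∀ u, f u = -(ftilde u + σ / 2 * ‖u‖ ^ 2) := fun u ↦ by rw [hft]; ring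
  have hd : Differentiable ℝ ftilde := hft ▸ (hf.differentiable two_ne_zero).neg.sub
    (((contDiff_norm_sq ℝ).differentiable one_ne_zero).const_mul _)
  have hstep : ∀ τ, f xstar - f (x (τ + 1)) +
      (1 + σ / M) * (1 / (2 * α)) * ‖x (τ + 1) - xstar‖ ^ 2 ≤
      1 / (2 * α) * ‖x τ - xstar‖ ^ 2 + ε τ * ‖x (τ + 1) - xstar‖ := fun τ ↦ by
    have := proximal_gradient_step_le hX hconv hd hLip (hxX τ) (hxX (τ + 1)) hxstar
      (by simpa only [hA] using hmin τ)
    have hσM : (1 + σ / M) * (M / 2) = (σ + M) / 2 := by field_simp; ring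
    rw [hA, hσM, hε, ← neg_add', norm_neg, hf_eq, hf_eq]
    linarith
  simpa only [one_div_one_div] using
    sum_Icc_pow_mul_le_sq_of_step (r := fun i ↦ ‖x i - xstar‖) (by rw [hA]; positivity)
      (by positivity)
      (fun i ↦ sub_nonneg.2 (hopt _ (hxX i))) (fun i ↦ hε i ▸ norm_nonneg _) (norm_nonneg _)
      (fun τ ↦ hstep τ) t

theorem stmt_16 (d : ℕ) (σ M α : ℝ) (hσ : 0 < σ) (hM : 0 < M) (hα : α = 1 / M)
    (X : Set (EuclideanSpace ℝ (Fin d))) (hX : Convex ℝ X) (hXc : IsCompact X)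
    (f ftilde : EuclideanSpace ℝ (Fin d) → ℝ) (hf : ContDiff ℝ 2 f)
    (hft : ftilde = fun x => -f x - σ / 2 * ‖x‖ ^ 2)
    (hconv : ConvexOn ℝ X ftilde)
    (hLip : ∀ x y : EuclideanSpace ℝ (Fin d),
      ‖gradient ftilde x - gradient ftilde y‖ ≤ M * ‖x - y‖)
    (xstar : EuclideanSpace ℝ (Fin d)) (hxstar : xstar ∈ X)
    (hopt : ∀ x ∈ X, f x ≤ f xstar)
    (x g : ℕ → EuclideanSpace ℝ (Fin d)) (hxX : ∀ τ, x τ ∈ X)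
    (hmin : ∀ τ, ∀ u ∈ X,
      -⟪g τ, x (τ + 1)⟫ + σ / 2 * ‖x (τ + 1)‖ ^ 2 +
          1 / (2 * α) * ‖x (τ + 1) - x τ‖ ^ 2 ≤
        -⟪g τ, u⟫ + σ / 2 * ‖u‖ ^ 2 + 1 / (2 * α) * ‖u - x τ‖ ^ 2)
    (ε : ℕ → ℝ) (hε : ∀ τ, ε τ = ‖-g τ - gradient ftilde (x τ)‖)
    (c : ℕ → ℝ) (hc : ∀ τ, c τ = (1 + σ / M) ^ τ) :
    ∀ t : ℕ, 1 ≤ t →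
      ∑ i ∈ Finset.Icc 1 t, c (i - 1) * (f xstar - f (x i)) ≤
        (Real.sqrt (1 / (2 * α)) * ‖x 0 - xstar‖ +
          ∑ i ∈ Finset.Icc 1 t,
            Real.sqrt (2 * α) * c (i - 1) * ε (i - 1) / Real.sqrt (c i)) ^ 2 :=
  stmt_16_general d σ M α hσ hM hα X hX f ftilde hf hft hconv hLip xstar hxstar hopt x g hxX hmin ε
    hε c hc
end

section
/- One-step inexact proximal inequality: under the setting of strongly concave f with f̃(x) = −f(x) − (σ/2)‖x‖² convex and M-Lipschitz-gradient, α = 1/M, x_{τ+1} the proximal update with inexact gradient ĝ_τ and error ε_τ = ‖−ĝ_τ − ∇f̃(x_τ)‖_2, for every x in the feasible set: ((σ + 1/α)/2)·‖x − x_{τ+1}‖² − f(x_{τ+1}) ≤ −f(x) + (1/(2α))‖x − x_τ‖² + ε_τ·‖x − x_{τ+1}‖. -/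
/-!
The update `xnext` minimises over `X` a `(σ + M)`-strongly convex quadratic, so the value of that
quadratic at any `x ∈ X` exceeds its minimum by `(σ + M) / 2 * ‖x - xnext‖ ^ 2`. Bounding
`f̃ xnext` above by the descent lemma at `xτ`, and `f̃ xτ` above by the gradient inequality of the
convex `f̃` towards `x`, trades the inexact gradient `g` for the true one; the discrepancy is
`⟪-g - ∇f̃ xτ, x - xnext⟫`, which Cauchy–Schwarz bounds by `ε * ‖x - xnext‖`.
-/

open RealInnerProductSpace Set Filter Topology

section Gradient

variable {E : Type*} [NormedAddCommGroup E] [InnerProductSpace ℝ E] [CompleteSpace E]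
  {f : E → ℝ}

theorem HasGradientAt.hasDerivAt_comp_add_smul {g z v : E} {t : ℝ}
    (hf : HasGradientAt f g (z + t • v)) :
    HasDerivAt (fun s : ℝ => f (z + s • v)) ⟪g, v⟫ t := by
  have hline : HasDerivAt (fun s : ℝ => z + s • v) v t := by
    simpa using ((hasDerivAt_id t).smul_const v).const_add z
  exact hf.hasFDerivAt.comp_hasDerivAt t hline

theorem le_add_inner_gradient_add_sq_of_lipschitz_gradient {M : ℝ} (hf : Differentiable ℝ f)
    (hLip : ∀ x y : E, ‖gradient f x - gradient f y‖ ≤ M * ‖x - y‖) (z y : E) :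
    f y ≤ f z + ⟪gradient f z, y - z⟫ + M / 2 * ‖y - z‖ ^ 2 := by
  set v := y - z
  let h : ℝ → ℝ := fun t => f (z + t • v) - t * ⟪gradient f z, v⟫ - M / 2 * t ^ 2 * ‖v‖ ^ 2
  let h' : ℝ → ℝ := fun t =>
    ⟪gradient f (z + t • v), v⟫ - ⟪gradient f z, v⟫ - M * t * ‖v‖ ^ 2
  have hderiv (t : ℝ) : HasDerivAt h (h' t) t := by
    have hsum := ((hf (z + t • v)).hasGradientAt.hasDerivAt_comp_add_smul.sub
      ((hasDerivAt_id t).mul_const ⟪gradient f z, v⟫)).sub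
      (((hasDerivAt_pow 2 t).const_mul (M / 2)).mul_const (‖v‖ ^ 2))
    refine hsum.congr_deriv ?_
    simp only [h']
    push_cast
    ring
  have hnonpos (t : ℝ) (ht : 0 ≤ t) : h' t ≤ 0 := by
    have hgrad : ‖gradient f (z + t • v) - gradient f z‖ ≤ M * (t * ‖v‖) := by
      simpa [norm_smul, abs_of_nonneg ht] using hLip (z + t • v) z
    have hinner := (real_inner_le_norm (gradient f (z + t • v) - gradient f z) v).trans
      (mul_le_mul_of_nonneg_right hgrad (norm_nonneg v))
    simp only [h', inner_sub_left] at hinner ⊢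
    nlinarith
  have hanti : AntitoneOn h (Ici 0) := by
    refine antitoneOn_of_hasDerivWithinAt_nonpos (convex_Ici 0)
      (fun t _ => (hderiv t).continuousAt.continuousWithinAt)
      (fun t _ => (hderiv t).hasDerivWithinAt) fun t ht => hnonpos t ?_
    rw [interior_Ici] at ht
    exact ht.le
  have hend := hanti self_mem_Ici (show (0 : ℝ) ≤ 1 from zero_le_one) zero_le_one
  simp only [h, v, zero_smul, add_zero, one_smul, add_sub_cancel] at hend
  linarith

theorem ConvexOn.add_inner_le_of_hasGradientAt {s : Set E} (hconv : ConvexOn ℝ s f)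
    {g z x : E} (hf : HasGradientAt f g z) (hz : z ∈ s) (hx : x ∈ s) :
    f z + ⟪g, x - z⟫ ≤ f x := by
  have hline := hconv.comp_affineMap (AffineMap.lineMap z x)
  have hcomp : f ∘ AffineMap.lineMap z x = fun t : ℝ => f (z + t • (x - z)) := by
    funext t
    simp [AffineMap.lineMap_apply_module', add_comm]
  rw [hcomp] at hline
  have hderiv : HasDerivAt (fun t : ℝ => f (z + t • (x - z))) ⟪g, x - z⟫ 0 :=
    HasGradientAt.hasDerivAt_comp_add_smul (by simpa using hf)
  have hslope :=
    hline.le_slope_of_hasDerivAt (by simpa using hz) (by simpa using hx) zero_lt_one hderiv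
  simp only [slope_def_field, zero_smul, add_zero, one_smul, add_sub_cancel, sub_zero,
    div_one] at hslope
  linarith

end Gradient

theorem StrongConvexOn.add_sq_le_of_isMinOn {E : Type*} [NormedAddCommGroup E]
    [NormedSpace ℝ E] {s : Set E} {m : ℝ} {φ : E → ℝ} {x y : E} (hφ : StrongConvexOn s m φ)
    (hmin : IsMinOn φ s y) (hy : y ∈ s) (hx : x ∈ s) :
    φ y + m / 2 * ‖x - y‖ ^ 2 ≤ φ x := by
  have hbound : ∀ t ∈ Ioo (0 : ℝ) 1, m / 2 * (1 - t) * ‖x - y‖ ^ 2 ≤ φ x - φ y := by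
    rintro t ⟨ht0, ht1⟩
    have hconv := hφ.2 hy hx (sub_nonneg.2 ht1.le) ht0.le (sub_add_cancel 1 t)
    have hmin' :=
      isMinOn_iff.1 hmin _ (hφ.1 hy hx (sub_nonneg.2 ht1.le) ht0.le (sub_add_cancel 1 t))
    simp only [smul_eq_mul, norm_sub_rev y x] at hconv hmin'
    nlinarith
  have hlim : Tendsto (fun t : ℝ => m / 2 * (1 - t) * ‖x - y‖ ^ 2) (𝓝[>] 0)
      (𝓝 (m / 2 * (1 - 0) * ‖x - y‖ ^ 2)) :=
    ((continuous_const.mul (continuous_const.sub continuous_id)).mul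
      continuous_const).continuousWithinAt.tendsto
  have hend := le_of_tendsto hlim (by
    filter_upwards [Ioo_mem_nhdsGT one_pos] with t ht using hbound t ht)
  linarith

theorem strongConvexOn_neg_inner_add_norm_sq_add_norm_sub_sq {E : Type*} [NormedAddCommGroup E]
    [InnerProductSpace ℝ E] {s : Set E} (hs : Convex ℝ s) (g c : E) (σ M : ℝ) :
    StrongConvexOn s (σ + M) fun u => -⟪g, u⟫ + σ / 2 * ‖u‖ ^ 2 + M / 2 * ‖u - c‖ ^ 2 := by
  rw [strongConvexOn_iff_convex]
  refine (((innerₛₗ ℝ (-g - M • c)).convexOn hs).add_const (M / 2 * ‖c‖ ^ 2)).congr fun u _ => ?_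
  simp only [Pi.add_apply, innerₛₗ_apply_apply, norm_sub_sq_real, inner_sub_left, inner_neg_left,
    real_inner_smul_left, real_inner_comm c u]
  ring

theorem stmt_17_general (d : ℕ) (σ M α : ℝ) (hα : α = 1 / M)
    (X : Set (EuclideanSpace ℝ (Fin d)))
    (f ftilde : EuclideanSpace ℝ (Fin d) → ℝ) (hf : ContDiff ℝ 2 f)
    (hft : ftilde = fun x => -f x - σ / 2 * ‖x‖ ^ 2)
    (hconv : ConvexOn ℝ X ftilde)
    (hLip : ∀ x y : EuclideanSpace ℝ (Fin d),
      ‖gradient ftilde x - gradient ftilde y‖ ≤ M * ‖x - y‖)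
    (g xτ xnext : EuclideanSpace ℝ (Fin d)) (hxτ : xτ ∈ X) (hxnext : xnext ∈ X)
    (hmin : ∀ u ∈ X,
      -⟪g, xnext⟫ + σ / 2 * ‖xnext‖ ^ 2 + 1 / (2 * α) * ‖xnext - xτ‖ ^ 2 ≤
        -⟪g, u⟫ + σ / 2 * ‖u‖ ^ 2 + 1 / (2 * α) * ‖u - xτ‖ ^ 2)
    (ε : ℝ) (hε : ε = ‖-g - gradient ftilde xτ‖) :
    ∀ x ∈ X,
      (σ + 1 / α) / 2 * ‖x - xnext‖ ^ 2 - f xnext ≤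
        -f x + 1 / (2 * α) * ‖x - xτ‖ ^ 2 + ε * ‖x - xnext‖ := by
  intro x hx
  have hhalf : 1 / (2 * α) = M / 2 := by rw [hα, one_div, one_div, mul_inv, inv_inv]; ring
  rw [hhalf] at hmin ⊢
  rw [show 1 / α = M by rw [hα, one_div_one_div]]
  have hdiff : Differentiable ℝ ftilde := by
    rw [hft]
    exact (hf.differentiable two_ne_zero).neg.sub
      ((differentiable_id.norm_sq ℝ).const_mul (σ / 2))
  have hprox := StrongConvexOn.add_sq_le_of_isMinOn
    (strongConvexOn_neg_inner_add_norm_sq_add_norm_sub_sq hconv.1 g xτ σ M)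
    (isMinOn_iff.2 hmin) hxnext hx
  have hdescent := le_add_inner_gradient_add_sq_of_lipschitz_gradient hdiff hLip xτ xnext
  have hsubgrad := hconv.add_inner_le_of_hasGradientAt (hdiff xτ).hasGradientAt hxτ hx
  have herror : ⟪gradient ftilde xτ, xnext - xτ⟫ - ⟪gradient ftilde xτ, x - xτ⟫
      + ⟪g, xnext⟫ - ⟪g, x⟫ ≤ ε * ‖x - xnext‖ := by
    calc _ = ⟪-g - gradient ftilde xτ, x - xnext⟫ := by
          simp only [inner_sub_left, inner_sub_right, inner_neg_left]; ring
      _ ≤ ε * ‖x - xnext‖ := hε ▸ real_inner_le_norm _ _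
  have hvalue (y) : ftilde y = -f y - σ / 2 * ‖y‖ ^ 2 := congrFun hft y
  linarith [hvalue x, hvalue xnext]

theorem stmt_17 (d : ℕ) (σ M α : ℝ) (hσ : 0 < σ) (hM : 0 < M) (hα : α = 1 / M)
    (X : Set (EuclideanSpace ℝ (Fin d))) (hX : Convex ℝ X) (hXc : IsCompact X)
    (f ftilde : EuclideanSpace ℝ (Fin d) → ℝ) (hf : ContDiff ℝ 2 f)
    (hft : ftilde = fun x => -f x - σ / 2 * ‖x‖ ^ 2)
    (hconv : ConvexOn ℝ X ftilde)
    (hLip : ∀ x y : EuclideanSpace ℝ (Fin d),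
      ‖gradient ftilde x - gradient ftilde y‖ ≤ M * ‖x - y‖)
    (g xτ xnext : EuclideanSpace ℝ (Fin d)) (hxτ : xτ ∈ X) (hxnext : xnext ∈ X)
    (hmin : ∀ u ∈ X,
      -⟪g, xnext⟫ + σ / 2 * ‖xnext‖ ^ 2 + 1 / (2 * α) * ‖xnext - xτ‖ ^ 2 ≤
        -⟪g, u⟫ + σ / 2 * ‖u‖ ^ 2 + 1 / (2 * α) * ‖u - xτ‖ ^ 2)
    (ε : ℝ) (hε : ε = ‖-g - gradient ftilde xτ‖) :
    ∀ x ∈ X,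
      (σ + 1 / α) / 2 * ‖x - xnext‖ ^ 2 - f xnext ≤
        -f x + 1 / (2 * α) * ‖x - xτ‖ ^ 2 + ε * ‖x - xnext‖ :=
  stmt_17_general d σ M α hα X f ftilde hf hft hconv hLip g xτ xnext hxτ hxnext hmin ε hε
end
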